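/- Let σ be a strictly convex rational polyhedral cone in N^ℝ and L ⊆ N a primitive sublattice. Let τ be the maximal face of σ with L ∩ τ° ≠ ∅, where τ° denotes the relative interior, set L̂ := (L^ℝ + Lin(τ)) ∩ N with Lin(τ) the linear hull of τ, and let P : N → N/L̂ be the projection. Then P^ℝ(σ) is a strictly convex rational polyhedral cone in (N/L̂)^ℝ, and the fan consisting of all faces of P^ℝ(σ) is the quotient fan of the fan of faces of σ by L. -/

import Mathlib

open Set

/-- The coercion of an integral vector in `ℤ^n` to a real vector in `ℝ^n`. -/
def toR {n : ℕ} (v : Fin n → ℤ) : Fin n → ℝ := fun i => (v i : ℝ)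

/-- The scalar extension `F^ℝ : N^ℝ → N'^ℝ` of a `ℤ`-linear map `F : N → N'`,
where `N = ℤ^n`, `N' = ℤ^m`. -/
noncomputable def extR {n m : ℕ} (F : (Fin n → ℤ) →ₗ[ℤ] (Fin m → ℤ)) :
    (Fin n → ℝ) →ₗ[ℝ] (Fin m → ℝ) :=
  (Matrix.of fun i j => ((F (Pi.single j 1)) i : ℝ)).mulVecLin

/-- A convex cone: a subset containing `0` that is closed under addition and
under multiplication by nonnegative scalars. -/
def IsCone {V : Type*} [AddCommGroup V] [Module ℝ V] (σ : Set V) : Prop :=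
  0 ∈ σ ∧ (∀ x ∈ σ, ∀ y ∈ σ, x + y ∈ σ) ∧ ∀ c : ℝ, 0 ≤ c → ∀ x ∈ σ, c • x ∈ σ

/-- The convex-cone hull of a set: the smallest convex cone containing it. -/
def coneHull {V : Type*} [AddCommGroup V] [Module ℝ V] (s : Set V) : Set V :=
  ⋂₀ {σ | IsCone σ ∧ s ⊆ σ}

/-- A rational polyhedral cone in `ℝ^n`: a convex cone generated by finitely
many vectors of the lattice `ℤ^n`. -/
def IsRatCone {n : ℕ} (σ : Set (Fin n → ℝ)) : Prop :=
  ∃ s : Finset (Fin n → ℤ), σ = coneHull (toR '' ↑s)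

/-- A cone is strictly convex if it contains no nonzero linear subspace,
equivalently `σ ∩ (-σ) = {0}`. -/
def IsStrictlyConvexCone {V : Type*} [AddCommGroup V] [Module ℝ V] (σ : Set V) : Prop :=
  ∀ x ∈ σ, -x ∈ σ → x = 0

/-- `τ` is a face of the convex cone `σ`: a subcone such that whenever
`x, y ∈ σ` and `x + y ∈ τ`, then `x, y ∈ τ`. -/
def IsFaceOf {V : Type*} [AddCommGroup V] [Module ℝ V] (τ σ : Set V) : Prop :=
  IsCone τ ∧ τ ⊆ σ ∧ ∀ x ∈ σ, ∀ y ∈ σ, x + y ∈ τ → x ∈ τ ∧ y ∈ τ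

/-- A system of `N`-cones: a finite set of rational polyhedral cones in `ℝ^n`. -/
def IsConeSystem {n : ℕ} (S : Set (Set (Fin n → ℝ))) : Prop :=
  S.Finite ∧ ∀ σ ∈ S, IsRatCone σ

/-- A quasifan: a finite set of rational polyhedral cones, closed under taking
faces, in which any two cones intersect in a common face. -/
def IsQuasifan {n : ℕ} (Δ : Set (Set (Fin n → ℝ))) : Prop :=
  IsConeSystem Δ ∧ (∀ σ ∈ Δ, ∀ τ, IsFaceOf τ σ → τ ∈ Δ) ∧
    ∀ σ ∈ Δ, ∀ σ' ∈ Δ, IsFaceOf (σ ∩ σ') σ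

/-- A fan: a quasifan all of whose cones are strictly convex. -/
def IsFan {n : ℕ} (Δ : Set (Set (Fin n → ℝ))) : Prop :=
  IsQuasifan Δ ∧ ∀ σ ∈ Δ, IsStrictlyConvexCone σ

/-- `F` defines a map of systems of cones (in particular of (quasi-)fans):
every cone of `S` is mapped by `F^ℝ` into some cone of `S'`. -/
def IsConeMap {n m : ℕ} (F : (Fin n → ℤ) →ₗ[ℤ] (Fin m → ℤ))
    (S : Set (Set (Fin n → ℝ))) (S' : Set (Set (Fin m → ℝ))) : Prop :=
  ∀ σ ∈ S, ∃ τ ∈ S', extR F '' σ ⊆ τ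

/-- A sublattice `L ⊆ ℤ^n` is primitive if the quotient `ℤ^n/L` is
torsion-free. -/
def IsPrimitive {n : ℕ} (L : Submodule ℤ (Fin n → ℤ)) : Prop :=
  ∀ (v : Fin n → ℤ) (k : ℤ), k ≠ 0 → k • v ∈ L → v ∈ L

/-- The set of maximal cones of a system of cones. -/
def maxCones {n : ℕ} (Δ : Set (Set (Fin n → ℝ))) : Set (Set (Fin n → ℝ)) :=
  {σ ∈ Δ | ∀ τ ∈ Δ, σ ⊆ τ → σ = τ}

/-- `ρ` is a ray (one-dimensional cone) of `Δ`. -/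
def IsRay {n : ℕ} (Δ : Set (Set (Fin n → ℝ))) (ρ : Set (Fin n → ℝ)) : Prop :=
  ρ ∈ Δ ∧ Module.finrank ℝ (Submodule.span ℝ ρ) = 1

/-- `Δt`, together with the surjection `P : ℤ^n → ℤ^m` onto the quotient of
`ℤ^n` by the primitive sublattice `L̂ = ker P ⊇ L`, is the quotient fan of the
system of cones `S` by `L`: the projection `P` defines a map of systems of
cones from `S` to the fan `Δt` and every map of systems of cones `F` from `S`
to a fan with `F(L) = 0` factors through `P` via a map of fans. -/
def IsQuotientFan {n m : ℕ} (S : Set (Set (Fin n → ℝ))) (L : Submodule ℤ (Fin n → ℤ))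
    (P : (Fin n → ℤ) →ₗ[ℤ] (Fin m → ℤ)) (Δt : Set (Set (Fin m → ℝ))) : Prop :=
  Function.Surjective P ∧ L ≤ LinearMap.ker P ∧ IsPrimitive (LinearMap.ker P) ∧
  IsFan Δt ∧ IsConeMap P S Δt ∧
  ∀ (k : ℕ) (F : (Fin n → ℤ) →ₗ[ℤ] (Fin k → ℤ)) (Δ' : Set (Set (Fin k → ℝ))),
    IsFan Δ' → IsConeMap F S Δ' → L ≤ LinearMap.ker F →
    ∃ Ft : (Fin m → ℤ) →ₗ[ℤ] (Fin k → ℤ), IsConeMap Ft Δt Δ' ∧ F = Ft.comp P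



variable {V W : Type*} [AddCommGroup V] [Module ℝ V] [AddCommGroup W] [Module ℝ W]

lemma isCone_coe (C : Submodule {c : ℝ // 0 ≤ c} V) : IsCone (C : Set V) :=
  ⟨C.zero_mem, fun x hx y hy => C.add_mem hx hy,
   fun c hc x hx => by simpa using C.smul_mem ⟨c, hc⟩ hx⟩

lemma isCone_submodule (C : Submodule ℝ V) : IsCone (C : Set V) :=
  ⟨C.zero_mem, fun x hx y hy => C.add_mem hx hy, fun c _ x hx => C.smul_mem c hx⟩

lemma isCone_coneHull (s : Set V) : IsCone (coneHull s) := by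
  refine ⟨?_, ?_, ?_⟩
  · exact fun σ hσ => hσ.1.1
  · intro x hx y hy σ hσ
    exact hσ.1.2.1 x (hx σ hσ) y (hy σ hσ)
  · intro c hc x hx σ hσ
    exact hσ.1.2.2 c hc x (hx σ hσ)

lemma subset_coneHull (s : Set V) : s ⊆ coneHull s :=
  fun x hx σ hσ => hσ.2 hx

lemma coneHull_min {s σ : Set V} (hsub : s ⊆ σ) (hσ : IsCone σ) : coneHull s ⊆ σ :=
  fun x hx => hx σ ⟨hσ, hsub⟩

lemma coneHull_mono {s t : Set V} (h : s ⊆ t) : coneHull s ⊆ coneHull t :=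
  coneHull_min (h.trans (subset_coneHull t)) (isCone_coneHull t)

lemma coneHull_eq_span (s : Set V) :
    coneHull s = (Submodule.span {c : ℝ // 0 ≤ c} s : Set V) := by
  refine subset_antisymm (coneHull_min Submodule.subset_span (isCone_coe _)) ?_
  intro x hx
  induction hx using Submodule.span_induction with
  | mem x h => exact subset_coneHull s h
  | zero => exact (isCone_coneHull s).1
  | add x y _ _ hx hy => exact (isCone_coneHull s).2.1 x hx y hy
  | smul c x _ hx => exact (isCone_coneHull s).2.2 c.1 c.2 x hx

lemma IsCone.sum_mem {σ : Set V} (hσ : IsCone σ) {ι : Type*} {t : Finset ι} {f : ι → V}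
    (hf : ∀ i ∈ t, f i ∈ σ) : ∑ i ∈ t, f i ∈ σ := by
  classical
  induction t using Finset.induction_on with
  | empty => simpa using hσ.1
  | insert _ _ hni ih =>
    rw [Finset.sum_insert hni]
    exact hσ.2.1 _ (hf _ (Finset.mem_insert_self _ _)) _
      (ih fun i hi => hf i (Finset.mem_insert_of_mem hi))

lemma isCone_image (f : V →ₗ[ℝ] W) {σ : Set V} (hσ : IsCone σ) : IsCone (f '' σ) := by
  refine ⟨⟨0, hσ.1, map_zero f⟩, ?_, ?_⟩
  · rintro _ ⟨x, hx, rfl⟩ _ ⟨y, hy, rfl⟩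
    exact ⟨x + y, hσ.2.1 x hx y hy, map_add f x y⟩
  · rintro c hc _ ⟨x, hx, rfl⟩
    exact ⟨c • x, hσ.2.2 c hc x hx, map_smul f c x⟩

lemma image_coneHull (f : V →ₗ[ℝ] W) (s : Set V) :
    f '' coneHull s = coneHull (f '' s) := by
  refine subset_antisymm ?_ ?_
  · rintro _ ⟨x, hx, rfl⟩
    have : coneHull s ⊆ f ⁻¹' (coneHull (f '' s)) := by
      refine coneHull_min ?_ ?_
      · intro y hy; exact subset_coneHull _ ⟨y, hy, rfl⟩
      · have hc := isCone_coneHull (f '' s)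
        refine ⟨by simpa [map_zero] using hc.1, ?_, ?_⟩
        · intro x hx y hy; simpa [map_add] using hc.2.1 _ hx _ hy
        · intro c hc' x hx; simpa [map_smul] using hc.2.2 c hc' _ hx
    exact this hx
  · exact coneHull_min (Set.image_mono (subset_coneHull s))
      (isCone_image f (isCone_coneHull s))

lemma coneHull_subset_span (s : Set V) :
    coneHull s ⊆ (Submodule.span ℝ s : Set V) :=
  coneHull_min Submodule.subset_span (isCone_submodule _)

lemma span_coneHull (s : Set V) :
    Submodule.span ℝ (coneHull s) = Submodule.span ℝ s := by
  refine le_antisymm (Submodule.span_le.2 (coneHull_subset_span s)) ?_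
  exact Submodule.span_mono (subset_coneHull s)

/-! ### Faces -/

lemma IsFaceOf.refl {σ : Set V} (h : IsCone σ) : IsFaceOf σ σ :=
  ⟨h, subset_rfl, fun x hx y hy _ => ⟨hx, hy⟩⟩

lemma IsFaceOf.trans {τ ρ σ : Set V} (h1 : IsFaceOf τ ρ) (h2 : IsFaceOf ρ σ) :
    IsFaceOf τ σ := by
  refine ⟨h1.1, h1.2.1.trans h2.2.1, fun x hx y hy hxy => ?_⟩
  have hρ := h2.2.2 x hx y hy (h1.2.1 hxy)
  exact h1.2.2 x hρ.1 y hρ.2 hxy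

lemma IsFaceOf.inter {ρ ρ' σ : Set V} (h : IsFaceOf ρ σ) (h' : IsFaceOf ρ' σ) :
    IsFaceOf (ρ ∩ ρ') σ := by
  refine ⟨⟨⟨h.1.1, h'.1.1⟩, ?_, ?_⟩, fun x hx => h.2.1 hx.1, fun x hx y hy hxy => ?_⟩
  · intro x hx y hy; exact ⟨h.1.2.1 x hx.1 y hy.1, h'.1.2.1 x hx.2 y hy.2⟩
  · intro c hc x hx; exact ⟨h.1.2.2 c hc x hx.1, h'.1.2.2 c hc x hx.2⟩
  · obtain ⟨h1, h2⟩ := h.2.2 x hx y hy hxy.1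
    obtain ⟨h3, h4⟩ := h'.2.2 x hx y hy hxy.2
    exact ⟨⟨h1, h3⟩, ⟨h2, h4⟩⟩

lemma IsFaceOf.subset_isFace {ρ ρ' σ : Set V} (h : IsFaceOf ρ σ) (h' : IsFaceOf ρ' σ)
    (hsub : ρ' ⊆ ρ) : IsFaceOf ρ' ρ :=
  ⟨h'.1, hsub, fun x hx y hy hxy => h'.2.2 x (h.2.1 hx) y (h.2.1 hy) hxy⟩

lemma IsFaceOf.sum_mem_each {τ σ : Set V} (hτ : IsFaceOf τ σ) (hσ : IsCone σ)
    {ι : Type*} {t : Finset ι} {f : ι → V} (hf : ∀ i ∈ t, f i ∈ σ)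
    (hsum : ∑ i ∈ t, f i ∈ τ) : ∀ i ∈ t, f i ∈ τ := by
  classical
  induction t using Finset.induction_on with
  | empty => simp
  | @insert a t hni ih =>
    rw [Finset.sum_insert hni] at hsum
    have h1 : f a ∈ σ := hf _ (Finset.mem_insert_self _ _)
    have h2 : ∑ i ∈ t, f i ∈ σ := hσ.sum_mem fun i hi => hf i (Finset.mem_insert_of_mem hi)
    obtain ⟨ha, hs⟩ := hτ.2.2 _ h1 _ h2 hsum
    intro i hi
    rcases Finset.mem_insert.1 hi with rfl | hi
    · exact ha
    · exact ih (fun j hj => hf j (Finset.mem_insert_of_mem hj)) hs i hi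

/-- A face of a cone generated by a finite set is generated by the generators it contains. -/
lemma IsFaceOf.eq_coneHull_inter {g : Set V} (hg : g.Finite) {τ : Set V}
    (hτ : IsFaceOf τ (coneHull g)) : τ = coneHull (g ∩ τ) := by
  classical
  refine subset_antisymm ?_ (coneHull_min Set.inter_subset_right hτ.1)
  intro x hx
  have hxσ : x ∈ coneHull g := hτ.2.1 hx
  rw [coneHull_eq_span, ← hg.coe_toFinset, SetLike.mem_coe, Submodule.mem_span_finset] at hxσ
  obtain ⟨f, -, hf⟩ := hxσ
  have hterm : ∀ i ∈ hg.toFinset, f i • i ∈ coneHull g := by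
    intro i hi
    exact (isCone_coneHull g).2.2 (f i).1 (f i).2 i
      (subset_coneHull g (by simpa using hi))
  have hmem : ∀ i ∈ hg.toFinset, f i • i ∈ τ := by
    refine hτ.sum_mem_each (isCone_coneHull g) hterm ?_
    have : ∑ i ∈ hg.toFinset, f i • i ∈ τ := by
      rw [show (∑ i ∈ hg.toFinset, f i • i) = x from hf]; exact hx
    simpa using this
  have : x = ∑ i ∈ hg.toFinset, f i • i := hf.symm
  rw [this]
  refine (isCone_coneHull (g ∩ τ)).sum_mem ?_
  intro i hi
  rcases eq_or_lt_of_le (f i).2 with h0 | hpos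
  · have : f i • i = (0:ℝ) • i := by rw [← Nonneg.coe_smul]; rw [← h0]
    rw [this, zero_smul]
    exact (isCone_coneHull _).1
  · have hiτ : i ∈ τ := by
      have := hτ.1.2.2 ((f i).1)⁻¹ (by positivity) _ (hmem i hi)
      rwa [← Nonneg.coe_smul, smul_smul, inv_mul_cancel₀ (ne_of_gt hpos), one_smul] at this
    refine (isCone_coneHull _).2.2 (f i).1 (f i).2 i ?_
    exact subset_coneHull _ ⟨by simpa using hi, hiτ⟩

lemma finite_faces {g : Set V} (hg : g.Finite) :
    {τ | IsFaceOf τ (coneHull g)}.Finite := by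
  have : {τ | IsFaceOf τ (coneHull g)} ⊆ coneHull '' {u | u ⊆ g} := by
    intro τ hτ
    exact ⟨g ∩ τ, Set.inter_subset_left, (hτ.eq_coneHull_inter hg).symm⟩
  exact Set.Finite.subset (Set.Finite.image _ hg.finite_subsets) this


/-! ### toR and extR -/

lemma toR_add {n : ℕ} (v w : Fin n → ℤ) : toR (v + w) = toR v + toR w := by
  funext i; simp [toR]

lemma toR_zero {n : ℕ} : toR (0 : Fin n → ℤ) = 0 := by funext i; simp [toR]

lemma toR_zsmul {n : ℕ} (c : ℤ) (v : Fin n → ℤ) : toR (c • v) = (c : ℝ) • toR v := by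
  funext i; simp [toR]

lemma toR_injective {n : ℕ} : Function.Injective (toR (n := n)) := by
  intro v w h
  funext i
  have h2 := congrFun h i
  simpa [toR] using h2

lemma toR_sum {n : ℕ} {ι : Type*} (t : Finset ι) (f : ι → (Fin n → ℤ)) :
    toR (∑ i ∈ t, f i) = ∑ i ∈ t, toR (f i) := by
  classical
  induction t using Finset.induction_on with
  | empty => simp [toR_zero]
  | insert _ _ h ih => rw [Finset.sum_insert h, Finset.sum_insert h, toR_add, ih]

lemma toR_single {n : ℕ} (j : Fin n) : toR (Pi.single j (1 : ℤ)) = Pi.single j (1 : ℝ) := by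
  funext i
  simp [toR, Pi.single_apply]

lemma extR_toR {n m : ℕ} (F : (Fin n → ℤ) →ₗ[ℤ] (Fin m → ℤ)) (v : Fin n → ℤ) :
    extR F (toR v) = toR (F v) := by
  have hv : v = ∑ j, v j • Pi.single j (1:ℤ) := by
    funext i
    rw [Finset.sum_apply]
    simp [Pi.single_apply]
  funext i
  have hFv : F v = ∑ j, v j • F (Pi.single j (1:ℤ)) := by
    conv_lhs => rw [hv]
    rw [map_sum]
    exact Finset.sum_congr rfl fun j _ => by rw [map_smul]
  simp only [extR, Matrix.mulVecLin_apply, Matrix.mulVec, dotProduct, Matrix.of_apply]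
  rw [toR, hFv, Finset.sum_apply]
  push_cast
  exact Finset.sum_congr rfl fun j _ => by simp [toR]; ring

lemma extR_eq_of_forall_toR {n m : ℕ} (f g : (Fin n → ℝ) →ₗ[ℝ] (Fin m → ℝ))
    (h : ∀ v : Fin n → ℤ, f (toR v) = g (toR v)) : f = g := by
  apply (Pi.basisFun ℝ (Fin n)).ext
  intro j
  have : (Pi.basisFun ℝ (Fin n)) j = toR (Pi.single j (1:ℤ)) := by
    rw [toR_single]; simp [Pi.basisFun_apply]
  rw [this]; exact h _

lemma extR_comp {n m k : ℕ} (A : (Fin m → ℤ) →ₗ[ℤ] (Fin k → ℤ))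
    (B : (Fin n → ℤ) →ₗ[ℤ] (Fin m → ℤ)) :
    extR (A.comp B) = (extR A).comp (extR B) := by
  apply extR_eq_of_forall_toR
  intro v
  simp [extR_toR, LinearMap.comp_apply]

lemma extR_id {n : ℕ} : extR (LinearMap.id : (Fin n → ℤ) →ₗ[ℤ] (Fin n → ℤ)) = LinearMap.id := by
  apply extR_eq_of_forall_toR
  intro v
  simp [extR_toR]
/-! ### Windows: explicit characterization of the intrinsic interior -/

section Win

variable {n : ℕ}

/-- `x` has an `ε`-window in `s`: the ball of radius `ε` around `x` inside `span ℝ s`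
is contained in `s`. -/
def Win (s : Set (Fin n → ℝ)) (x : Fin n → ℝ) (ε : ℝ) : Prop :=
  x ∈ Submodule.span ℝ s ∧ ∀ y, y ∈ Submodule.span ℝ s → dist y x < ε → y ∈ s

lemma mem_affineSpan_iff_span {s : Set (Fin n → ℝ)} (h0 : (0 : Fin n → ℝ) ∈ s)
    (x : Fin n → ℝ) : x ∈ affineSpan ℝ s ↔ x ∈ Submodule.span ℝ s := by
  have h := affineSpan_insert_zero (k := ℝ) s
  rw [Set.insert_eq_of_mem h0] at h
  constructor
  · intro hx
    have : x ∈ (affineSpan ℝ s : Set (Fin n → ℝ)) := hx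
    rw [h] at this; exact this
  · intro hx
    have : x ∈ (Submodule.span ℝ s : Set (Fin n → ℝ)) := hx
    rw [← h] at this; exact this

lemma mem_intrinsicInterior_iff_win {s : Set (Fin n → ℝ)} (h0 : (0 : Fin n → ℝ) ∈ s)
    {x : Fin n → ℝ} : x ∈ intrinsicInterior ℝ s ↔ ∃ ε > 0, Win s x ε := by
  rw [mem_intrinsicInterior]
  constructor
  · rintro ⟨y, hy, rfl⟩
    rw [mem_interior_iff_mem_nhds, Metric.mem_nhds_iff] at hy
    obtain ⟨ε, hε, hball⟩ := hy
    refine ⟨ε, hε, (mem_affineSpan_iff_span h0 _).1 y.2, fun z hz hdist => ?_⟩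
    have hz' : z ∈ affineSpan ℝ s := (mem_affineSpan_iff_span h0 _).2 hz
    have : (⟨z, hz'⟩ : affineSpan ℝ s) ∈ Metric.ball y ε := by
      rw [Metric.mem_ball, Subtype.dist_eq]
      exact hdist
    exact hball this
  · rintro ⟨ε, hε, hxspan, hwin⟩
    have hx' : x ∈ affineSpan ℝ s := (mem_affineSpan_iff_span h0 _).2 hxspan
    refine ⟨⟨x, hx'⟩, ?_, rfl⟩
    rw [mem_interior_iff_mem_nhds, Metric.mem_nhds_iff]
    refine ⟨ε, hε, fun z hz => ?_⟩
    rw [Metric.mem_ball, Subtype.dist_eq] at hz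
    exact hwin z ((mem_affineSpan_iff_span h0 _).1 z.2) hz

lemma Win.mem {s : Set (Fin n → ℝ)} {x : Fin n → ℝ} {ε : ℝ} (hε : 0 < ε)
    (h : Win s x ε) : x ∈ s :=
  h.2 x h.1 (by simpa using hε)

lemma Win.near {s : Set (Fin n → ℝ)} {x y : Fin n → ℝ} {ε : ℝ} (h : Win s x ε)
    (hy : y ∈ Submodule.span ℝ s) (hd : dist y x < ε) : Win s y (ε - dist y x) := by
  refine ⟨hy, fun z hz hdz => h.2 z hz ?_⟩
  calc dist z x ≤ dist z y + dist y x := dist_triangle _ _ _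
    _ < ε := by linarith

lemma Win.add_mem {s : Set (Fin n → ℝ)} (hs : IsCone s) {x g : Fin n → ℝ} {ε : ℝ}
    (h : Win s x ε) (hg : g ∈ s) : Win s (x + g) ε := by
  have hgspan : g ∈ Submodule.span ℝ s := Submodule.subset_span hg
  refine ⟨Submodule.add_mem _ h.1 hgspan, fun y hy hd => ?_⟩
  have h1 : y - g ∈ Submodule.span ℝ s := Submodule.sub_mem _ hy hgspan
  have h2 : dist (y - g) x < ε := by
    have : dist (y - g) x = dist y (x + g) := by
      rw [dist_eq_norm, dist_eq_norm]
      congr 1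
      abel
    rwa [this]
  have := h.2 _ h1 h2
  have := hs.2.1 _ this _ hg
  simpa using this

lemma Win.smul {s : Set (Fin n → ℝ)} (hs : IsCone s) {x : Fin n → ℝ} {ε c : ℝ}
    (hc : 0 < c) (h : Win s x ε) : Win s (c • x) (c * ε) := by
  refine ⟨Submodule.smul_mem _ c h.1, fun y hy hd => ?_⟩
  have h1 : c⁻¹ • y ∈ Submodule.span ℝ s := Submodule.smul_mem _ _ hy
  have h2 : dist (c⁻¹ • y) x < ε := by
    have : dist (c⁻¹ • y) x = c⁻¹ * dist y (c • x) := by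
      rw [dist_eq_norm, dist_eq_norm, ← norm_smul_of_nonneg (by positivity : (0:ℝ) ≤ c⁻¹)]
      congr 1
      rw [smul_sub, smul_smul, inv_mul_cancel₀ (ne_of_gt hc), one_smul]
    rw [this]
    calc c⁻¹ * dist y (c • x) < c⁻¹ * (c * ε) := by
          apply mul_lt_mul_of_pos_left hd (by positivity)
      _ = ε := by field_simp
  have := hs.2.2 c (le_of_lt hc) _ (h.2 _ h1 h2)
  rwa [smul_smul, mul_inv_cancel₀ (ne_of_gt hc), one_smul] at this

/-- From a relative interior point one can move within the span and stay in the cone. -/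
lemma intrinsicInterior_move {s : Set (Fin n → ℝ)} (hs : IsCone s) {x u : Fin n → ℝ}
    (hx : x ∈ intrinsicInterior ℝ s) (hu : u ∈ Submodule.span ℝ s) :
    ∃ ε : ℝ, 0 < ε ∧ x + ε • u ∈ s := by
  obtain ⟨ε, hε, hwin⟩ := (mem_intrinsicInterior_iff_win hs.1).1 hx
  rcases eq_or_ne u 0 with rfl | hu0
  · exact ⟨1, one_pos, by simpa using hwin.mem hε⟩
  · have hn : 0 < ‖u‖ := norm_pos_iff.2 hu0
    refine ⟨ε / (2 * ‖u‖), by positivity, ?_⟩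
    refine hwin.2 _ (Submodule.add_mem _ hwin.1 (Submodule.smul_mem _ _ hu)) ?_
    have : dist (x + (ε / (2 * ‖u‖)) • u) x = (ε / (2 * ‖u‖)) * ‖u‖ := by
      rw [dist_eq_norm]
      have : x + (ε / (2 * ‖u‖)) • u - x = (ε / (2 * ‖u‖)) • u := by abel
      rw [this, norm_smul_of_nonneg (by positivity)]
    rw [this]
    rw [div_mul_eq_mul_div, mul_comm (2:ℝ) ‖u‖, ← div_div, mul_div_assoc]
    rw [div_self (ne_of_gt hn), mul_one]
    linarith

end Win
/-! ### The minimal face containing a point -/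

section MinFace

variable {n : ℕ}

/-- The minimal face of the cone `σ` containing `p`. -/
def minFace (σ : Set (Fin n → ℝ)) (p : Fin n → ℝ) : Set (Fin n → ℝ) :=
  {x ∈ σ | ∃ c : ℝ, 0 ≤ c ∧ c • p - x ∈ σ}

lemma isFaceOf_minFace {σ : Set (Fin n → ℝ)} (hσ : IsCone σ) (p : Fin n → ℝ) :
    IsFaceOf (minFace σ p) σ := by
  refine ⟨⟨⟨hσ.1, 0, le_refl 0, by simpa using hσ.1⟩, ?_, ?_⟩, fun x hx => hx.1,
    fun x hx y hy hxy => ?_⟩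
  · rintro x ⟨hx, c, hc, hcx⟩ y ⟨hy, d, hd, hdy⟩
    refine ⟨hσ.2.1 x hx y hy, c + d, by linarith, ?_⟩
    have : (c + d) • p - (x + y) = (c • p - x) + (d • p - y) := by
      rw [add_smul]; abel
    rw [this]
    exact hσ.2.1 _ hcx _ hdy
  · rintro c hc x ⟨hx, d, hd, hdx⟩
    refine ⟨hσ.2.2 c hc x hx, c * d, by positivity, ?_⟩
    have : (c * d) • p - c • x = c • (d • p - x) := by
      rw [smul_sub, smul_smul]
    rw [this]
    exact hσ.2.2 c hc _ hdx
  · obtain ⟨hmem, c, hc, hcs⟩ := hxy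
    constructor
    · refine ⟨hx, c, hc, ?_⟩
      have : c • p - x = (c • p - (x + y)) + y := by abel
      rw [this]; exact hσ.2.1 _ hcs _ hy
    · refine ⟨hy, c, hc, ?_⟩
      have : c • p - y = (c • p - (x + y)) + x := by abel
      rw [this]; exact hσ.2.1 _ hcs _ hx

lemma mem_minFace_self {σ : Set (Fin n → ℝ)} (hσ : IsCone σ) {p : Fin n → ℝ} (hp : p ∈ σ) :
    p ∈ minFace σ p :=
  ⟨hp, 1, zero_le_one, by simpa using hσ.1⟩

lemma minFace_min {σ G : Set (Fin n → ℝ)} (hσ : IsCone σ) {p : Fin n → ℝ}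
    (hG : IsFaceOf G σ) (hp : p ∈ G) : minFace σ p ⊆ G := by
  rintro x ⟨hx, c, hc, hcx⟩
  have hcp : c • p ∈ G := hG.1.2.2 c hc p hp
  have : x + (c • p - x) = c • p := by abel
  exact (hG.2.2 x hx _ hcx (by rw [this]; exact hcp)).1

/-- An auxiliary linear map taking coefficients to their linear combination. -/
noncomputable def sumSmul {α : Type*} [Fintype α] (v : α → (Fin n → ℝ)) :
    (α → ℝ) →ₗ[ℝ] (Fin n → ℝ) where
  toFun c := ∑ i, c i • v i
  map_add' c d := by simp [add_smul, Finset.sum_add_distrib]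
  map_smul' r c := by simp [smul_smul, Finset.smul_sum]

lemma sumSmul_apply {α : Type*} [Fintype α] (v : α → (Fin n → ℝ)) (c : α → ℝ) :
    sumSmul v c = ∑ i, c i • v i := rfl

lemma range_sumSmul {α : Type*} [Fintype α] [DecidableEq α] (v : α → (Fin n → ℝ)) :
    LinearMap.range (sumSmul v) = Submodule.span ℝ (Set.range v) := by
  refine le_antisymm ?_ ?_
  · rintro _ ⟨c, rfl⟩
    rw [sumSmul_apply]
    exact Submodule.sum_mem _ fun i _ =>
      Submodule.smul_mem _ _ (Submodule.subset_span ⟨i, rfl⟩)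
  · rw [Submodule.span_le]
    rintro _ ⟨i, rfl⟩
    refine ⟨Pi.single i 1, ?_⟩
    rw [sumSmul_apply]
    rw [Finset.sum_eq_single i]
    · simp
    · intro j _ hj; simp [Pi.single_apply, hj]
    · simp

/-- Key lemma: a point of a polyhedral cone lies in the relative interior of
its minimal face. -/
lemma mem_intrinsicInterior_minFace {g : Set (Fin n → ℝ)} (hg : g.Finite)
    {p : Fin n → ℝ} (hp : p ∈ coneHull g) :
    p ∈ intrinsicInterior ℝ (minFace (coneHull g) p) := by
  classical
  set σ := coneHull g with hσdef
  have hσ : IsCone σ := isCone_coneHull g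
  set F := minFace σ p with hFdef
  have hFface : IsFaceOf F σ := isFaceOf_minFace hσ p
  have hFcone : IsCone F := hFface.1
  have hpF : p ∈ F := mem_minFace_self hσ hp
  have hFgen : F = coneHull (g ∩ F) := hFface.eq_coneHull_inter hg
  have hTfin : (g ∩ F).Finite := hg.inter_of_left F
  -- spans agree
  have hspan : Submodule.span ℝ F = Submodule.span ℝ (g ∩ F) := by
    conv_lhs => rw [hFgen]
    exact span_coneHull _
  -- for each generator, one can move backwards a little
  have hback : ∀ v ∈ g ∩ F, ∃ δ : ℝ, 0 < δ ∧ p - δ • v ∈ F := by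
    rintro v ⟨hvg, hvσ, c, hc, hcv⟩
    have hvF : v ∈ F := ⟨hvσ, c, hc, hcv⟩
    have hcpF : c • p - v ∈ F := by
      have hsum : (c • p - v) + v = c • p := by abel
      have hcpmem : c • p ∈ F := hFcone.2.2 c hc p hpF
      exact (hFface.2.2 _ hcv _ hvσ (by rw [hsum]; exact hcpmem)).1
    rcases eq_or_lt_of_le hc with rfl | hcpos
    · refine ⟨1, one_pos, ?_⟩
      have hnegv : -v ∈ F := by simpa using hcpF
      have := hFcone.2.1 p hpF _ hnegv
      simpa [sub_eq_add_neg] using this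
    · refine ⟨c⁻¹, by positivity, ?_⟩
      have := hFcone.2.2 c⁻¹ (by positivity) _ hcpF
      rwa [smul_sub, smul_smul, inv_mul_cancel₀ (ne_of_gt hcpos), one_smul] at this
  choose! δf hδpos hδmem using hback
  -- coefficient extraction
  set T := hTfin.toFinset with hTdef
  set W := Submodule.span ℝ (g ∩ F) with hWdef
  have hrangeW : Submodule.span ℝ (Set.range (fun t : T => (t : Fin n → ℝ))) = W := by
    rw [hWdef]
    congr 1
    rw [Subtype.range_coe_subtype]
    ext x; simp [hTdef]
  let φ : (T → ℝ) →ₗ[ℝ] W :=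
    (sumSmul (fun t : T => (t : Fin n → ℝ))).codRestrict W (fun c => by
      rw [← hrangeW]
      exact Submodule.sum_mem _ fun i _ =>
        Submodule.smul_mem _ _ (Submodule.subset_span ⟨i, rfl⟩))
  have hφsurj : LinearMap.range φ = ⊤ := by
    rw [LinearMap.range_eq_top]
    rintro ⟨w, hw⟩
    rw [← hrangeW, ← range_sumSmul] at hw
    obtain ⟨c, hc⟩ := hw
    exact ⟨c, Subtype.ext hc⟩
  obtain ⟨ψ, hψ⟩ := φ.exists_rightInverse_of_surjective hφsurj
  let ψc := LinearMap.toContinuousLinearMap ψ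
  set K := ‖ψc‖ with hKdef
  have hK0 : 0 ≤ K := hKdef ▸ norm_nonneg ψc
  -- minimum of the δ's
  by_cases hTne : T.Nonempty
  case neg =>
    -- T empty: F = {0}-ish case, everything degenerate
    have hTempty : (g ∩ F) = ∅ := by
      rw [Set.eq_empty_iff_forall_notMem]
      intro x hx
      exact hTne ⟨x, by rw [hTdef, hTfin.mem_toFinset]; exact hx⟩
    have hspanbot : Submodule.span ℝ F = ⊥ := by
      rw [hspan, hWdef, hTempty, Submodule.span_empty]
    have hp0 : p ∈ Submodule.span ℝ F := Submodule.subset_span hpF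
    rw [hspanbot, Submodule.mem_bot] at hp0
    rw [mem_intrinsicInterior_iff_win hFcone.1]
    refine ⟨1, one_pos, Submodule.subset_span hpF, fun y hy _ => ?_⟩
    rw [hspanbot, Submodule.mem_bot] at hy
    rw [hy, ← hp0]
    exact hpF
  case pos =>
  have htmem : ∀ t : T, (t : Fin n → ℝ) ∈ g ∩ F := fun t =>
    hTfin.mem_toFinset.mp t.2
  set δmin := T.inf' hTne δf with hδmindef
  have hδminpos : 0 < δmin := by
    rw [hδmindef, Finset.lt_inf'_iff]
    intro t ht
    exact hδpos t (by simpa [hTdef] using ht)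
  have hδminle : ∀ t : T, δmin ≤ δf t := fun t => Finset.inf'_le _ t.2
  set ε := δmin / ((K + 1) * (T.card + 1)) with hεdef
  have hεpos : 0 < ε := by
    rw [hεdef]
    have h1 : (0:ℝ) < K + 1 := by linarith
    have h2 : (0:ℝ) < (T.card : ℝ) + 1 := by have := Nat.cast_nonneg (α := ℝ) T.card; linarith
    exact div_pos hδminpos (mul_pos h1 h2)
  rw [mem_intrinsicInterior_iff_win hFcone.1]
  refine ⟨ε, hεpos, Submodule.subset_span hpF, fun y hy hdist => ?_⟩
  -- extract coefficients for u = y - p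
  have hpspan : p ∈ Submodule.span ℝ F := Submodule.subset_span hpF
  set u := y - p with hudef
  have huW : u ∈ W := by
    rw [← hspan]
    exact Submodule.sub_mem _ hy hpspan
  set a := ψ ⟨u, huW⟩ with hadef
  have hrepr : ∑ t : T, a t • (t : Fin n → ℝ) = u := by
    have h1 : φ (ψ ⟨u, huW⟩) = ⟨u, huW⟩ := by
      rw [← LinearMap.comp_apply, hψ]
      rfl
    have h2 := congrArg Subtype.val h1
    rw [show (φ (ψ ⟨u, huW⟩) : Fin n → ℝ)
        = ∑ t : T, a t • (t : Fin n → ℝ) from rfl] at h2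
    exact h2
  have hunorm : ‖u‖ < ε := by
    rw [hudef, ← dist_eq_norm]
    exact hdist
  have habs : ∀ t : T, |a t| ≤ K * ‖u‖ := by
    intro t
    have h1 : |a t| ≤ ‖a‖ := by
      have := norm_le_pi_norm a t
      simpa using this
    have h2 : ‖a‖ ≤ K * ‖u‖ := by
      have h3 : ψc ⟨u, huW⟩ = a := by
        rw [hadef]
        simp [ψc]
      have h4 := ψc.le_opNorm ⟨u, huW⟩
      rw [h3] at h4
      have h5 : ‖(⟨u, huW⟩ : W)‖ = ‖u‖ := rfl
      rw [h5] at h4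
      exact h4
    linarith
  -- set up convex combination
  set μ : T → ℝ := fun t => max (-(a t)) 0 / δf t with hμdef
  have hμ0 : ∀ t, 0 ≤ μ t := by
    intro t
    have := hδpos _ (htmem t)
    positivity
  have hμδ : ∀ t : T, μ t * δf t = max (-(a t)) 0 := by
    intro t
    rw [hμdef]
    exact div_mul_cancel₀ _ (ne_of_gt (hδpos _ (htmem t)))
  set ν : T → ℝ := fun t => a t + μ t * δf t with hνdef
  have hν0 : ∀ t, 0 ≤ ν t := by
    intro t
    rw [hνdef]
    simp only [hμδ t]
    rcases le_or_gt 0 (a t) with h | h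
    · have : max (-(a t)) 0 = 0 := max_eq_right (by linarith)
      rw [this]; linarith
    · have : max (-(a t)) 0 = -(a t) := max_eq_left (by linarith)
      rw [this]; linarith
  set S := ∑ t : T, μ t with hSdef
  have hμle : ∀ t : T, μ t ≤ K * ε / δmin := by
    intro t
    have h1 : max (-(a t)) 0 ≤ |a t| := by
      rcases le_or_gt 0 (a t) with h | h
      · rw [max_eq_right (by linarith)]; positivity
      · rw [max_eq_left (by linarith), abs_of_neg h]
    have h2 : |a t| ≤ K * ε := by
      have := habs t
      nlinarith [hunorm, hK0, abs_nonneg (a t)]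
    rw [hμdef]
    exact div_le_div₀ (mul_nonneg hK0 hεpos.le) (h1.trans h2) hδminpos (hδminle t)
  have hS1 : S ≤ 1 := by
    have h1 : S ≤ (T.card : ℝ) * (K * ε / δmin) := by
      rw [hSdef]
      have := Finset.sum_le_card_nsmul Finset.univ μ (K * ε / δmin)
        (fun t _ => hμle t)
      simpa [nsmul_eq_mul, Finset.card_univ] using this
    have h2 : (T.card : ℝ) * (K * ε / δmin) ≤ 1 := by
      have hc0 : (0:ℝ) ≤ (T.card : ℝ) := Nat.cast_nonneg _
      have hKe : K * ε / δmin = K / ((K + 1) * (T.card + 1)) := by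
        rw [hεdef]
        rw [div_eq_iff hδminpos.ne']
        ring
      rw [hKe, ← mul_div_assoc]
      rw [div_le_one (mul_pos (by linarith) (by linarith))]
      nlinarith [hK0, hc0]
    linarith
  -- the convex combination identity
  have hterm : ∀ t : T, μ t • (p - δf ↑t • (↑t : Fin n → ℝ)) + ν t • (↑t : Fin n → ℝ)
      = μ t • p + a t • (↑t : Fin n → ℝ) := by
    intro t
    rw [smul_sub, smul_smul, hνdef]
    have : (a t + μ t * δf ↑t) • (↑t : Fin n → ℝ)
        = a t • (↑t : Fin n → ℝ) + (μ t * δf ↑t) • (↑t : Fin n → ℝ) := add_smul _ _ _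
    rw [this]
    abel
  have hxy : (1 - S) • p + ∑ t : T, (μ t • (p - δf ↑t • (↑t : Fin n → ℝ))
      + ν t • (↑t : Fin n → ℝ)) = y := by
    rw [Finset.sum_congr rfl (fun t _ => hterm t), Finset.sum_add_distrib,
      ← Finset.sum_smul, ← hSdef, hrepr, sub_smul, one_smul]
    rw [hudef]
    abel
  -- memberships
  rw [← hxy]
  refine hFcone.2.1 _ (hFcone.2.2 _ (by linarith) _ hpF) _ ?_
  refine hFcone.sum_mem fun t _ => ?_
  refine hFcone.2.1 _ (hFcone.2.2 _ (hμ0 t) _ (hδmem _ (htmem t))) _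
    (hFcone.2.2 _ (hν0 t) _ (htmem t).2)

end MinFace
/-! ### Rationality machinery -/

section RatMachinery

variable {n : ℕ}

/-- Coercion `ℚ^n → ℝ^n`. -/
def castQ (v : Fin n → ℚ) : Fin n → ℝ := fun i => (v i : ℝ)

/-- Coercion `ℤ^n → ℚ^n`. -/
def castZQ (v : Fin n → ℤ) : Fin n → ℚ := fun i => (v i : ℚ)

lemma toR_eq_castQ (v : Fin n → ℤ) : toR v = castQ (castZQ v) := by
  funext i; simp [toR, castQ, castZQ]

lemma castQ_add (v w : Fin n → ℚ) : castQ (v + w) = castQ v + castQ w := by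
  funext i; simp [castQ]

lemma castQ_zero : castQ (0 : Fin n → ℚ) = 0 := by funext i; simp [castQ]

lemma castQ_smul (q : ℚ) (v : Fin n → ℚ) : castQ (q • v) = (q : ℝ) • castQ v := by
  funext i; simp [castQ]

lemma castZQ_add (v w : Fin n → ℤ) : castZQ (v + w) = castZQ v + castZQ w := by
  funext i; simp [castZQ]

lemma castZQ_zsmul (c : ℤ) (v : Fin n → ℤ) : castZQ (c • v) = (c : ℚ) • castZQ v := by
  funext i; simp [castZQ]

lemma castQ_sum_smul {ι : Type*} (t : Finset ι) (f : ι → ℚ) (w : ι → (Fin n → ℚ)) :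
    castQ (∑ i ∈ t, f i • w i) = ∑ i ∈ t, (f i : ℝ) • castQ (w i) := by
  classical
  induction t using Finset.induction_on with
  | empty => simp [castQ_zero]
  | insert _ _ h ih =>
    rw [Finset.sum_insert h, Finset.sum_insert h, castQ_add, castQ_smul, ih]

/-- `ℚ`-linearly independent rational vectors are `ℝ`-linearly independent. -/
lemma linearIndependent_castQ {k : ℕ} {v : Fin k → (Fin n → ℚ)}
    (hv : LinearIndependent ℚ v) : LinearIndependent ℝ (fun i => castQ (v i)) := by
  classical
  set M : Matrix (Fin n) (Fin k) ℚ := Matrix.of (fun i j => v j i) with hMdef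
  have hmulVec : ∀ (c : Fin k → ℚ), M.mulVec c = ∑ j, c j • v j := by
    intro c
    funext i
    rw [Matrix.mulVec, dotProduct, Finset.sum_apply]
    exact Finset.sum_congr rfl fun j _ => by
      simp [hMdef, mul_comm]
  have hker : LinearMap.ker (Matrix.toLin' M) = ⊥ := by
    rw [LinearMap.ker_eq_bot']
    intro c hc
    rw [Matrix.toLin'_apply, hmulVec] at hc
    have := Fintype.linearIndependent_iff.1 hv c hc
    funext j; exact this j
  obtain ⟨g, hg⟩ := (Matrix.toLin' M).exists_leftInverse_of_injective hker
  set G := LinearMap.toMatrix' g with hGdef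
  have hGM : G * M = 1 := by
    rw [hGdef, ← LinearMap.toMatrix'_toLin' M, ← LinearMap.toMatrix'_comp, hg,
      LinearMap.toMatrix'_id]
  set Mr : Matrix (Fin n) (Fin k) ℝ := M.map ⇑(Rat.castHom ℝ) with hMrdef
  set Gr : Matrix (Fin k) (Fin n) ℝ := G.map ⇑(Rat.castHom ℝ) with hGrdef
  have hGMr : Gr * Mr = 1 := by
    rw [hGrdef, hMrdef, ← Matrix.map_mul, hGM]
    exact Matrix.map_one _ (by simp) (by simp)
  rw [Fintype.linearIndependent_iff]
  intro c hc
  have hMrc : Mr.mulVec c = 0 := by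
    rw [show Mr.mulVec c = ∑ j, c j • castQ (v j) by
      funext i
      rw [Matrix.mulVec, dotProduct, Finset.sum_apply]
      exact Finset.sum_congr rfl fun j _ => by
        simp [hMrdef, hMdef, castQ, mul_comm]]
    exact hc
  intro i
  have : Gr.mulVec (Mr.mulVec c) = c := by
    rw [Matrix.mulVec_mulVec, hGMr, Matrix.one_mulVec]
  rw [hMrc, Matrix.mulVec_zero] at this
  exact (congrFun this i).symm

/-- The real span of (the cast of) a rational subspace has the same dimension. -/
lemma finrank_span_castQ (Aq : Submodule ℚ (Fin n → ℚ)) :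
    Module.finrank ℝ (Submodule.span ℝ (castQ '' (Aq : Set (Fin n → ℚ))))
      = Module.finrank ℚ Aq := by
  classical
  set d := Module.finrank ℚ Aq with hd
  let b : Module.Basis (Fin d) ℚ Aq := Module.finBasis ℚ Aq
  set u : Fin d → (Fin n → ℚ) := fun i => (b i : Fin n → ℚ) with hu
  have huind : LinearIndependent ℚ u :=
    b.linearIndependent.map' Aq.subtype (Submodule.ker_subtype _)
  have hruind : LinearIndependent ℝ (fun i => castQ (u i)) := linearIndependent_castQ huind
  have hspan : Submodule.span ℝ (castQ '' (Aq : Set (Fin n → ℚ)))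
      = Submodule.span ℝ (Set.range fun i => castQ (u i)) := by
    refine le_antisymm ?_ ?_
    · rw [Submodule.span_le]
      rintro _ ⟨a, ha, rfl⟩
      have hrepr : (⟨a, ha⟩ : Aq) = ∑ i, b.repr ⟨a, ha⟩ i • b i := (b.sum_repr ⟨a, ha⟩).symm
      have hval : a = ∑ i, b.repr ⟨a, ha⟩ i • u i := by
        have := congrArg Subtype.val hrepr
        simpa only [hu, Submodule.coe_sum, Submodule.coe_smul] using this
      rw [hval, castQ_sum_smul]
      exact Submodule.sum_mem _ fun i _ =>
        Submodule.smul_mem _ _ (Submodule.subset_span ⟨i, rfl⟩)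
    · rw [Submodule.span_le]
      rintro _ ⟨i, rfl⟩
      exact Submodule.subset_span ⟨u i, (b i).2, rfl⟩
  rw [hspan, finrank_span_eq_card hruind, Fintype.card_fin]

lemma span_castQ_sup (A B : Submodule ℚ (Fin n → ℚ)) :
    Submodule.span ℝ (castQ '' ((A ⊔ B : Submodule ℚ (Fin n → ℚ)) : Set (Fin n → ℚ)))
      = Submodule.span ℝ (castQ '' (A : Set (Fin n → ℚ)))
        ⊔ Submodule.span ℝ (castQ '' (B : Set (Fin n → ℚ))) := by
  refine le_antisymm ?_ ?_
  · rw [Submodule.span_le]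
    rintro _ ⟨x, hx, rfl⟩
    obtain ⟨a, ha, b0, hb, rfl⟩ := Submodule.mem_sup.1 hx
    rw [castQ_add]
    exact Submodule.add_mem _
      (Submodule.mem_sup_left (Submodule.subset_span ⟨a, ha, rfl⟩))
      (Submodule.mem_sup_right (Submodule.subset_span ⟨b0, hb, rfl⟩))
  · refine sup_le ?_ ?_ <;>
      exact Submodule.span_mono (Set.image_mono (by
        intro x hx
        first
          | exact Submodule.mem_sup_left hx
          | exact Submodule.mem_sup_right hx))

lemma span_castQ_inf (A B : Submodule ℚ (Fin n → ℚ)) :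
    Submodule.span ℝ (castQ '' ((A ⊓ B : Submodule ℚ (Fin n → ℚ)) : Set (Fin n → ℚ)))
      = Submodule.span ℝ (castQ '' (A : Set (Fin n → ℚ)))
        ⊓ Submodule.span ℝ (castQ '' (B : Set (Fin n → ℚ))) := by
  have hle : Submodule.span ℝ (castQ '' ((A ⊓ B : Submodule ℚ (Fin n → ℚ)) : Set (Fin n → ℚ)))
      ≤ Submodule.span ℝ (castQ '' (A : Set (Fin n → ℚ)))
        ⊓ Submodule.span ℝ (castQ '' (B : Set (Fin n → ℚ))) := by
    refine le_inf ?_ ?_ <;>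
      exact Submodule.span_mono (Set.image_mono (by
        intro x hx
        first | exact hx.1 | exact hx.2))
  have h1 := Submodule.finrank_sup_add_finrank_inf_eq A B
  have h2 := Submodule.finrank_sup_add_finrank_inf_eq
    (Submodule.span ℝ (castQ '' (A : Set (Fin n → ℚ))))
    (Submodule.span ℝ (castQ '' (B : Set (Fin n → ℚ))))
  have hA := finrank_span_castQ A
  have hB := finrank_span_castQ B
  have hAB := finrank_span_castQ (A ⊓ B)
  have hsup : Module.finrank ℝ
      ↥(Submodule.span ℝ (castQ '' (A : Set (Fin n → ℚ)))
        ⊔ Submodule.span ℝ (castQ '' (B : Set (Fin n → ℚ))))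
      = Module.finrank ℚ ↥(A ⊔ B) := by
    rw [← span_castQ_sup, finrank_span_castQ]
  have hfin : Module.finrank ℝ
      ↥(Submodule.span ℝ (castQ '' (A : Set (Fin n → ℚ)))
        ⊓ Submodule.span ℝ (castQ '' (B : Set (Fin n → ℚ))))
      ≤ Module.finrank ℝ
        ↥(Submodule.span ℝ (castQ '' ((A ⊓ B : Submodule ℚ (Fin n → ℚ)) : Set (Fin n → ℚ)))) := by
    omega
  exact Submodule.eq_of_le_of_finrank_le hle hfin

end RatMachinery
section RatMachinery2

variable {n : ℕ}

/-- Clearing denominators in the `ℚ`-span of (the image of) a `ℤ`-submodule. -/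
lemma exists_nat_smul_mem_castZQ {L : Submodule ℤ (Fin n → ℤ)} {a : Fin n → ℚ}
    (ha : a ∈ Submodule.span ℚ (castZQ '' (L : Set (Fin n → ℤ)))) :
    ∃ (m : ℕ) (l : Fin n → ℤ), 0 < m ∧ l ∈ L ∧ (m : ℚ) • a = castZQ l := by
  induction ha using Submodule.span_induction with
  | mem x hx =>
    obtain ⟨l, hl, rfl⟩ := hx
    exact ⟨1, l, one_pos, hl, by simp⟩
  | zero => exact ⟨1, 0, one_pos, Submodule.zero_mem L, by simp [castZQ]; rfl⟩
  | add x y _ _ hx hy =>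
    obtain ⟨m1, l1, hm1, hl1, he1⟩ := hx
    obtain ⟨m2, l2, hm2, hl2, he2⟩ := hy
    refine ⟨m1 * m2, (m2 : ℤ) • l1 + (m1 : ℤ) • l2, Nat.mul_pos hm1 hm2,
      L.add_mem (L.smul_mem _ hl1) (L.smul_mem _ hl2), ?_⟩
    rw [castZQ_add, castZQ_zsmul, castZQ_zsmul, ← he1, ← he2]
    push_cast
    push_cast
    rw [smul_add, smul_smul, smul_smul]
    congr 2
    ring
  | smul q x _ hx =>
    obtain ⟨m1, l1, hm1, hl1, he1⟩ := hx
    refine ⟨q.den * m1, q.num • l1, Nat.mul_pos q.den_pos hm1, L.smul_mem _ hl1, ?_⟩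
    rw [castZQ_zsmul, ← he1]
    rw [smul_smul, smul_smul]
    congr 1
    push_cast
    rw [mul_comm ((q.den : ℚ) * (m1:ℚ)) q, ← mul_assoc, Rat.mul_den_eq_num]

/-- The real span of a set of lattice vectors equals the real span of its `ℚ`-span. -/
lemma span_toR_eq_span_castQ (T : Set (Fin n → ℤ)) :
    Submodule.span ℝ (toR '' T)
      = Submodule.span ℝ (castQ '' ((Submodule.span ℚ (castZQ '' T)) : Set (Fin n → ℚ))) := by
  refine le_antisymm ?_ ?_
  · refine Submodule.span_mono ?_
    rintro _ ⟨t, ht, rfl⟩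
    exact ⟨castZQ t, Submodule.subset_span ⟨t, ht, rfl⟩, (toR_eq_castQ t).symm⟩
  · rw [Submodule.span_le]
    rintro _ ⟨a, ha, rfl⟩
    induction ha using Submodule.span_induction with
    | mem x hx =>
      obtain ⟨t, ht, rfl⟩ := hx
      rw [← toR_eq_castQ]
      exact Submodule.subset_span ⟨t, ht, rfl⟩
    | zero => rw [castQ_zero]; exact Submodule.zero_mem _
    | add x y _ _ hx hy => rw [castQ_add]; exact Submodule.add_mem _ hx hy
    | smul q x _ hx => rw [castQ_smul]; exact Submodule.smul_mem _ _ hx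

/-- Rational points are dense in the real span of a rational subspace. -/
lemma exists_rat_point_near (Dq : Submodule ℚ (Fin n → ℚ)) {x : Fin n → ℝ}
    (hx : x ∈ Submodule.span ℝ (castQ '' (Dq : Set (Fin n → ℚ)))) {ε : ℝ} (hε : 0 < ε) :
    ∃ ρ ∈ Dq, dist (castQ ρ) x < ε := by
  classical
  rw [Submodule.mem_span_set'] at hx
  obtain ⟨k, f, gg, hsum⟩ := hx
  have hch : ∀ i : Fin k, ∃ ρ : Fin n → ℚ, ρ ∈ Dq ∧ castQ ρ = (gg i : Fin n → ℝ) := by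
    intro i
    obtain ⟨ρ, hρ, he⟩ := (gg i).2
    exact ⟨ρ, hρ, he⟩
  choose ρf hρf hρfe using hch
  set B := ∑ i : Fin k, (‖(gg i : Fin n → ℝ)‖ + 1) with hBdef
  have hB0 : 0 ≤ B := Finset.sum_nonneg fun i _ => by positivity
  set η := ε / (B + 1) with hηdef
  have hηpos : 0 < η := by rw [hηdef]; positivity
  have hqch : ∀ i : Fin k, ∃ q : ℚ, |f i - (q : ℝ)| < η := fun i => exists_rat_near (f i) hηpos
  choose qf hqf using hqch
  refine ⟨∑ i, qf i • ρf i, Submodule.sum_mem _ fun i _ => Submodule.smul_mem _ _ (hρf i), ?_⟩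
  rw [castQ_sum_smul]
  rw [dist_eq_norm, ← hsum]
  have heq : ∑ i, ((qf i : ℝ)) • castQ (ρf i) - ∑ i, f i • (gg i : Fin n → ℝ)
      = ∑ i, (((qf i : ℝ)) - f i) • (gg i : Fin n → ℝ) := by
    rw [← Finset.sum_sub_distrib]
    exact Finset.sum_congr rfl fun i _ => by rw [hρfe i, sub_smul]
  rw [heq]
  calc ‖∑ i, (((qf i : ℝ)) - f i) • (gg i : Fin n → ℝ)‖
      ≤ ∑ i, ‖(((qf i : ℝ)) - f i) • (gg i : Fin n → ℝ)‖ := norm_sum_le _ _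
    _ ≤ ∑ i, η * (‖(gg i : Fin n → ℝ)‖ + 1) := by
        refine Finset.sum_le_sum fun i _ => ?_
        rw [norm_smul]
        have h1 : ‖((qf i : ℝ)) - f i‖ ≤ η := by
          rw [Real.norm_eq_abs, abs_sub_comm]
          exact le_of_lt (hqf i)
        have h2 : ‖(gg i : Fin n → ℝ)‖ ≤ ‖(gg i : Fin n → ℝ)‖ + 1 := by linarith
        exact mul_le_mul h1 h2 (norm_nonneg _) (le_of_lt hηpos)
    _ = η * B := by rw [hBdef, Finset.mul_sum]
    _ < ε := by
        rw [hηdef]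
        rw [div_mul_eq_mul_div, div_lt_iff₀ (by positivity)]
        nlinarith

end RatMachinery2
section MainGeom

variable {n : ℕ}

/-- A face of a rational cone is a rational cone whose generators lie in the face. -/
lemma face_ratgens {t : Finset (Fin n → ℤ)} {τ : Set (Fin n → ℝ)}
    (hτ : IsFaceOf τ (coneHull (toR '' ↑t))) :
    ∃ t' : Finset (Fin n → ℤ), toR '' ↑t' = (toR '' ↑t) ∩ τ ∧ τ = coneHull (toR '' ↑t') := by
  classical
  have himg : toR '' ↑(t.filter (fun v => toR v ∈ τ)) = (toR '' ↑t) ∩ τ := by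
    ext x
    constructor
    · rintro ⟨v, hv, rfl⟩
      rw [Finset.coe_filter, Set.mem_setOf_eq] at hv
      exact ⟨⟨v, hv.1, rfl⟩, hv.2⟩
    · rintro ⟨⟨v, hv, rfl⟩, hxτ⟩
      exact ⟨v, by rw [Finset.coe_filter, Set.mem_setOf_eq]; exact ⟨hv, hxτ⟩, rfl⟩
  refine ⟨t.filter (fun v => toR v ∈ τ), himg, ?_⟩
  conv_lhs => rw [hτ.eq_coneHull_inter ((t.finite_toSet).image toR)]
  rw [← himg]

/-- Main geometric lemma: any point of `σ` lying in `L^ℝ + Lin τ` lies in `τ`. -/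
lemma mem_tau_of_mem_V {s : Finset (Fin n → ℤ)} {τ : Set (Fin n → ℝ)}
    {L : Submodule ℤ (Fin n → ℤ)}
    (hτface : IsFaceOf τ (coneHull (toR '' ↑s)))
    (hτmeets : ∃ v ∈ L, toR v ∈ intrinsicInterior ℝ τ)
    (hτmax : ∀ τ', IsFaceOf τ' (coneHull (toR '' ↑s)) →
      (∃ v ∈ L, toR v ∈ intrinsicInterior ℝ τ') → τ' ⊆ τ)
    {z : Fin n → ℝ} (hz : z ∈ coneHull (toR '' ↑s))
    (hzV : z ∈ Submodule.span ℝ (toR '' (L : Set (Fin n → ℤ))) ⊔ Submodule.span ℝ τ) :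
    z ∈ τ := by
  classical
  set gens : Set (Fin n → ℝ) := toR '' ↑s with hgensdef
  have hgfin : gens.Finite := (s.finite_toSet).image toR
  set σ := coneHull gens with hσdef
  have hσ : IsCone σ := isCone_coneHull gens
  have hτcone : IsCone τ := hτface.1
  set V := Submodule.span ℝ (toR '' (L : Set (Fin n → ℤ))) ⊔ Submodule.span ℝ τ with hVdef
  obtain ⟨w, hwL, hwi⟩ := hτmeets
  set wb := toR w with hwbdef
  have hwbτ : wb ∈ τ := intrinsicInterior_subset hwi
  have hwbσ : wb ∈ σ := hτface.2.1 hwbτ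
  have hwbV : wb ∈ V := Submodule.mem_sup_left (Submodule.subset_span ⟨w, hwL, rfl⟩)
  set p₀ := z + wb with hp₀def
  have hp₀σ : p₀ ∈ σ := hσ.2.1 z hz wb hwbσ
  set F := minFace σ p₀ with hFdef
  have hFface : IsFaceOf F σ := isFaceOf_minFace hσ p₀
  have hFcone : IsCone F := hFface.1
  have hp₀F : p₀ ∈ F := mem_minFace_self hσ hp₀σ
  have hrel : p₀ ∈ intrinsicInterior ℝ F := mem_intrinsicInterior_minFace hgfin hp₀σ
  obtain ⟨hzF, hwbF⟩ := hFface.2.2 z hz wb hwbσ hp₀F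
  -- τ is contained in F
  have hτsubF : τ ⊆ F := by
    intro t ht
    have htspan : -t ∈ Submodule.span ℝ τ := Submodule.neg_mem _ (Submodule.subset_span ht)
    obtain ⟨ε₁, hε₁, hmem⟩ := intrinsicInterior_move hτcone hwi htspan
    have hsplit : (wb + ε₁ • (-t)) + ε₁ • t = wb := by
      rw [smul_neg]; abel
    have h1 : wb + ε₁ • (-t) ∈ σ := hτface.2.1 hmem
    have h2 : ε₁ • t ∈ σ := hσ.2.2 ε₁ (le_of_lt hε₁) t (hτface.2.1 ht)
    have h3 := (hFface.2.2 _ h1 _ h2 (by rw [hsplit]; exact hwbF)).2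
    have := hFcone.2.2 ε₁⁻¹ (by positivity) _ h3
    rwa [smul_smul, inv_mul_cancel₀ (ne_of_gt hε₁), one_smul] at this
  -- rational generators for τ and F
  obtain ⟨tτ, htτeq, htτgen⟩ := face_ratgens hτface
  obtain ⟨tF, htFeq, htFgen⟩ := face_ratgens hFface
  set AQ := Submodule.span ℚ (castZQ '' (L : Set (Fin n → ℤ))) with hAQdef
  set BQ := Submodule.span ℚ (castZQ '' (↑tτ : Set (Fin n → ℤ))) with hBQdef
  set CQ := Submodule.span ℚ (castZQ '' (↑tF : Set (Fin n → ℤ))) with hCQdef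
  have h1Q : Submodule.span ℝ (toR '' (L : Set (Fin n → ℤ)))
      = Submodule.span ℝ (castQ '' (AQ : Set (Fin n → ℚ))) := by
    rw [hAQdef]; exact span_toR_eq_span_castQ _
  have h2Q : Submodule.span ℝ τ
      = Submodule.span ℝ (castQ '' (BQ : Set (Fin n → ℚ))) := by
    conv_lhs => rw [htτgen]
    rw [span_coneHull, hBQdef]
    exact span_toR_eq_span_castQ _
  have hVQ : V
      = Submodule.span ℝ (castQ '' ((AQ ⊔ BQ : Submodule ℚ (Fin n → ℚ)) : Set (Fin n → ℚ))) := by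
    rw [hVdef, h1Q, h2Q, span_castQ_sup]
  have hFQ : Submodule.span ℝ F
      = Submodule.span ℝ (castQ '' (CQ : Set (Fin n → ℚ))) := by
    conv_lhs => rw [htFgen]
    rw [span_coneHull, hCQdef]
    exact span_toR_eq_span_castQ _
  -- window at p₀
  obtain ⟨ε, hε, hwin⟩ := (mem_intrinsicInterior_iff_win hFcone.1).1 hrel
  have hp₀V : p₀ ∈ V := Submodule.add_mem _ hzV hwbV
  have hp₀spanF : p₀ ∈ Submodule.span ℝ F := hwin.1
  -- p₀ lies in the real span of the rational subspace (AQ ⊔ BQ) ⊓ CQ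
  have hp₀W : p₀ ∈ Submodule.span ℝ
      (castQ '' (((AQ ⊔ BQ) ⊓ CQ : Submodule ℚ (Fin n → ℚ)) : Set (Fin n → ℚ))) := by
    rw [span_castQ_inf]
    exact ⟨by rw [← hVQ]; exact hp₀V, by rw [← hFQ]; exact hp₀spanF⟩
  -- rational approximation inside the window
  obtain ⟨ρ, hρmem, hρdist⟩ := exists_rat_point_near _ hp₀W hε
  set r := castQ ρ with hrdef
  have hrspanF : r ∈ Submodule.span ℝ F := by
    rw [hFQ]
    exact Submodule.subset_span ⟨ρ, hρmem.2, rfl⟩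
  have hwinr : Win F r (ε - dist r p₀) := hwin.near hrspanF hρdist
  have hεr : 0 < ε - dist r p₀ := by
    have h := hρdist
    linarith
  -- split ρ into lattice and τ parts
  obtain ⟨α, hα, β, hβ, hsum⟩ := Submodule.mem_sup.1 hρmem.1
  obtain ⟨m, l, hm, hl, hml⟩ := exists_nat_smul_mem_castZQ (hAQdef ▸ hα)
  have hm0 : (0:ℝ) < (m:ℝ) := by exact_mod_cast hm
  set tp := (m:ℝ) • castQ β with htpdef
  have htpτ : tp ∈ Submodule.span ℝ τ := by
    rw [htpdef]
    refine Submodule.smul_mem _ _ ?_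
    rw [h2Q]
    exact Submodule.subset_span ⟨β, hβ, rfl⟩
  have hmr : (m:ℝ) • r = toR l + tp := by
    rw [hrdef, htpdef]
    have h1 : ((m:ℚ):ℝ) • castQ ρ = castQ ((m:ℚ) • ρ) := (castQ_smul _ _).symm
    have h2 : ((m:ℚ):ℝ) = (m:ℝ) := by push_cast; rfl
    rw [← h2, h1, ← hsum, smul_add, castQ_add, hml, ← toR_eq_castQ, castQ_smul, h2]
  -- move back into τ using the interior point
  have htpneg : -tp ∈ Submodule.span ℝ τ := Submodule.neg_mem _ htpτ
  obtain ⟨ε₂, hε₂, hε₂mem⟩ := intrinsicInterior_move hτcone hwi htpneg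
  obtain ⟨k, hk⟩ := exists_nat_ge (ε₂⁻¹)
  have hkw : (k:ℝ) • wb - tp ∈ τ := by
    have hid : ε₂⁻¹ • (wb + ε₂ • (-tp)) + ((k:ℝ) - ε₂⁻¹) • wb = (k:ℝ) • wb - tp := by
      rw [smul_add, smul_smul, inv_mul_cancel₀ (ne_of_gt hε₂), sub_smul, one_smul]
      abel
    rw [← hid]
    refine hτcone.2.1 _ (hτcone.2.2 _ (by positivity) _ hε₂mem) _
      (hτcone.2.2 _ (by linarith [inv_nonneg.mpr (le_of_lt hε₂)]) _ hwbτ)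
  -- the lattice point in the relative interior of F
  set q := (m:ℝ) • r + ((k:ℝ) • wb - tp) with hqdef
  have hq : q = toR (l + (k:ℤ) • w) := by
    rw [hqdef, hmr, toR_add, toR_zsmul, hwbdef]
    push_cast
    abel
  have hwinq : Win F q ((m:ℝ) * (ε - dist r p₀)) :=
    (hwinr.smul hFcone hm0).add_mem hFcone (hτsubF hkw)
  have hqrel : q ∈ intrinsicInterior ℝ F := by
    rw [mem_intrinsicInterior_iff_win hFcone.1]
    exact ⟨(m:ℝ) * (ε - dist r p₀), by positivity, hwinq⟩
  have hFsubτ : F ⊆ τ := hτmax F hFface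
    ⟨l + (k:ℤ) • w, L.add_mem hl (L.smul_mem _ hwL), by rw [← hq]; exact hqrel⟩
  exact hFsubτ hzF

end MainGeom
section Kernel

variable {n : ℕ}

lemma pi_int_eq_sum (v : Fin n → ℤ) : v = ∑ j, v j • Pi.single j (1:ℤ) := by
  funext i
  rw [Finset.sum_apply]
  simp [Pi.single_apply]

lemma pi_real_eq_sum (x : Fin n → ℝ) : x = ∑ j, x j • (Pi.single j (1:ℝ) : Fin n → ℝ) := by
  funext i
  rw [Finset.sum_apply]
  simp [Pi.single_apply]

/-- The kernel of `extR P` is exactly `L^ℝ + Lin τ`. -/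
lemma ker_extR_eq_V {m : ℕ} {s : Finset (Fin n → ℤ)} {τ : Set (Fin n → ℝ)}
    {L : Submodule ℤ (Fin n → ℤ)}
    (hτface : IsFaceOf τ (coneHull (toR '' ↑s)))
    (P : (Fin n → ℤ) →ₗ[ℤ] (Fin m → ℤ)) (hPsurj : Function.Surjective P)
    (hPker : ∀ v : Fin n → ℤ, P v = 0 ↔ toR v ∈
      Submodule.span ℝ (toR '' (L : Set (Fin n → ℤ))) ⊔ Submodule.span ℝ τ) :
    LinearMap.ker (extR P)
      = Submodule.span ℝ (toR '' (L : Set (Fin n → ℤ))) ⊔ Submodule.span ℝ τ := by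
  classical
  set V := Submodule.span ℝ (toR '' (L : Set (Fin n → ℤ))) ⊔ Submodule.span ℝ τ with hVdef
  set K := LinearMap.ker (extR P) with hKdef
  -- V ≤ K
  obtain ⟨tτ, htτeq, htτgen⟩ := face_ratgens hτface
  have hgenker : ∀ x ∈ toR '' (↑tτ : Set (Fin n → ℤ)), x ∈ (K : Set (Fin n → ℝ)) := by
    rintro _ ⟨v, hv, rfl⟩
    have hvτ : toR v ∈ τ := (htτeq ▸ (Set.mem_image_of_mem toR hv)).2
    have hvV : toR v ∈ V := Submodule.mem_sup_right (Submodule.subset_span hvτ)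
    have : P v = 0 := (hPker v).2 hvV
    rw [SetLike.mem_coe, LinearMap.mem_ker, extR_toR, this, toR_zero]
  have hτK : τ ⊆ (K : Set (Fin n → ℝ)) := by
    rw [htτgen]
    exact coneHull_min hgenker (isCone_submodule _)
  have hLK : Submodule.span ℝ (toR '' (L : Set (Fin n → ℤ))) ≤ K := by
    rw [Submodule.span_le]
    rintro _ ⟨l, hl, rfl⟩
    have : P l = 0 := (hPker l).2 (Submodule.mem_sup_left (Submodule.subset_span ⟨l, hl, rfl⟩))
    rw [SetLike.mem_coe, LinearMap.mem_ker, extR_toR, this, toR_zero]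
  have hVK : V ≤ K := by
    rw [hVdef]
    exact sup_le hLK (Submodule.span_le.2 hτK)
  -- a section of P
  obtain ⟨sec, hsec⟩ := Module.projective_lifting_property P LinearMap.id hPsurj
  have hsec' : ∀ u, P (sec u) = u := fun u => by
    have := LinearMap.ext_iff.1 hsec u
    simpa using this
  -- extR P is surjective
  have hext_surj : Function.Surjective (extR P) := by
    intro y
    refine ⟨extR sec y, ?_⟩
    have : (extR P).comp (extR sec) = LinearMap.id := by
      rw [← extR_comp, hsec, extR_id]
    have := LinearMap.ext_iff.1 this y
    simpa using this
  -- dimension count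
  have hfinK : Module.finrank ℝ K + m = n := by
    have h1 := LinearMap.finrank_range_add_finrank_ker (extR P)
    rw [LinearMap.range_eq_top.2 hext_surj, finrank_top, Module.finrank_fin_fun,
      Module.finrank_fin_fun, ← hKdef] at h1
    omega
  set A := Submodule.span ℝ (toR '' ((LinearMap.ker P : Submodule ℤ (Fin n → ℤ))
    : Set (Fin n → ℤ))) with hAdef
  have hAV : A ≤ V := by
    rw [hAdef, Submodule.span_le]
    rintro _ ⟨k, hk, rfl⟩
    exact (hPker k).1 hk
  set B := Submodule.span ℝ (toR '' (Set.range fun j : Fin m => sec (Pi.single j 1)))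
    with hBdef
  have htop : A ⊔ B = ⊤ := by
    rw [eq_top_iff]
    intro x _
    have hx : x = ∑ j, x j • (Pi.single j (1:ℝ) : Fin n → ℝ) := pi_real_eq_sum x
    rw [hx]
    refine Submodule.sum_mem _ fun i _ => Submodule.smul_mem _ _ ?_
    have hei : Pi.single i (1:ℝ) = toR (Pi.single i (1:ℤ)) := (toR_single i).symm
    rw [hei]
    set e : Fin n → ℤ := Pi.single i (1:ℤ) with hedef
    have hsplit : e = (e - sec (P e)) + sec (P e) := by abel
    rw [hsplit, toR_add]
    refine Submodule.add_mem _ (Submodule.mem_sup_left ?_) (Submodule.mem_sup_right ?_)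
    · refine Submodule.subset_span ⟨e - sec (P e), ?_, rfl⟩
      rw [SetLike.mem_coe, LinearMap.mem_ker, map_sub, hsec' (P e), sub_self]
    · have hPe : sec (P e) = ∑ j, (P e) j • sec (Pi.single j (1:ℤ)) := by
        conv_lhs => rw [pi_int_eq_sum (P e)]
        rw [map_sum]
        exact Finset.sum_congr rfl fun j _ => by rw [map_smul]
      rw [hPe, toR_sum]
      refine Submodule.sum_mem _ fun j _ => ?_
      rw [toR_zsmul]
      exact Submodule.smul_mem _ _ (Submodule.subset_span ⟨sec (Pi.single j 1), ⟨j, rfl⟩, rfl⟩)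
  have hfinB : Module.finrank ℝ B ≤ m := by
    have hBr : B = LinearMap.range (sumSmul fun j : Fin m => toR (sec (Pi.single j 1))) := by
      rw [hBdef, range_sumSmul]
      congr 1
      rw [← Set.range_comp]
      rfl
    rw [hBr]
    have := LinearMap.finrank_range_le (sumSmul fun j : Fin m => toR (sec (Pi.single j 1)))
    rwa [Module.finrank_fin_fun] at this
  have hfinsup : Module.finrank ℝ ↥(A ⊔ B) ≤ Module.finrank ℝ ↥A + Module.finrank ℝ ↥B := by
    have := Submodule.finrank_sup_add_finrank_inf_eq A B
    omega
  have hfinA : n ≤ Module.finrank ℝ ↥A + m := by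
    have h1 : Module.finrank ℝ ↥(A ⊔ B) = n := by rw [htop, finrank_top, Module.finrank_fin_fun]
    omega
  have hmono1 : Module.finrank ℝ A ≤ Module.finrank ℝ V := Submodule.finrank_mono hAV
  have hmono2 : Module.finrank ℝ V ≤ Module.finrank ℝ K := Submodule.finrank_mono hVK
  exact (Submodule.eq_of_le_of_finrank_le hVK (by omega)).symm

end Kernel
/-- Let `σ` be a strictly convex rational polyhedral cone in
`N^ℝ` and `L ⊆ N` a primitive sublattice. Let `τ` be the maximal face of `σ`
whose relative interior meets `L`, set `L̂ := (L^ℝ + Lin(τ)) ∩ N`, and let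
`P : N → N/L̂` be the projection (a surjection whose kernel consists of the
lattice vectors lying in `L^ℝ + Lin(τ)`). Then `P^ℝ(σ)` is a strictly convex
rational polyhedral cone, and the fan of all faces of `P^ℝ(σ)` is the
quotient fan of the fan of faces of `σ` by `L`. -/
theorem affine_quotient_fan {n : ℕ} (σ : Set (Fin n → ℝ)) (hσ : IsRatCone σ)
    (hσsc : IsStrictlyConvexCone σ)
    (L : Submodule ℤ (Fin n → ℤ)) (hL : IsPrimitive L)
    (τ : Set (Fin n → ℝ)) (hτface : IsFaceOf τ σ)
    (hτmeets : ∃ v ∈ L, toR v ∈ intrinsicInterior ℝ τ)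
    (hτmax : ∀ τ', IsFaceOf τ' σ → (∃ v ∈ L, toR v ∈ intrinsicInterior ℝ τ') → τ' ⊆ τ)
    {m : ℕ} (P : (Fin n → ℤ) →ₗ[ℤ] (Fin m → ℤ)) (hPsurj : Function.Surjective P)
    (hPker : ∀ v : Fin n → ℤ, P v = 0 ↔ toR v ∈
      Submodule.span ℝ (toR '' (L : Set (Fin n → ℤ))) ⊔ Submodule.span ℝ τ) :
    IsRatCone (extR P '' σ) ∧ IsStrictlyConvexCone (extR P '' σ) ∧
    IsQuotientFan {τ' | IsFaceOf τ' σ} L P {ρ | IsFaceOf ρ (extR P '' σ)} := by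
  classical
  obtain ⟨s, hs⟩ := hσ
  have hσcone : IsCone σ := by rw [hs]; exact isCone_coneHull _
  have hτcone : IsCone τ := hτface.1
  have hτface' : IsFaceOf τ (coneHull (toR '' ↑s)) := by rw [← hs]; exact hτface
  have hτmax' : ∀ τ', IsFaceOf τ' (coneHull (toR '' ↑s)) →
      (∃ v ∈ L, toR v ∈ intrinsicInterior ℝ τ') → τ' ⊆ τ := by
    intro τ' h1 h2
    exact hτmax τ' (by rw [hs]; exact h1) h2
  set V := Submodule.span ℝ (toR '' (L : Set (Fin n → ℤ))) ⊔ Submodule.span ℝ τ with hVdef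
  have hker : LinearMap.ker (extR P) = V := ker_extR_eq_V hτface' P hPsurj hPker
  -- 1. The image is a rational cone.
  have hsets : extR P '' (toR '' ↑s) = toR '' ↑(s.image P) := by
    ext x
    constructor
    · rintro ⟨_, ⟨v, hv, rfl⟩, rfl⟩
      exact ⟨P v, by simpa using Finset.mem_image_of_mem P hv, (extR_toR P v).symm⟩
    · rintro ⟨_, hv, rfl⟩
      obtain ⟨v, hv', rfl⟩ := Finset.mem_image.1 (by simpa using hv)
      exact ⟨toR v, ⟨v, hv', rfl⟩, extR_toR P v⟩
  have himg : extR P '' σ = coneHull (toR '' ↑(s.image P)) := by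
    rw [hs, image_coneHull, hsets]
  have hRat : IsRatCone (extR P '' σ) := ⟨s.image P, himg⟩
  -- 2. The image is strictly convex.
  have hVsubker : ∀ x : Fin n → ℝ, x ∈ V → extR P x = 0 := by
    intro x hx
    rw [← LinearMap.mem_ker, hker]; exact hx
  have hsc : IsStrictlyConvexCone (extR P '' σ) := by
    rintro _ ⟨x, hx, rfl⟩ hneg
    obtain ⟨y, hy, hyeq⟩ := hneg
    have hxy0 : extR P (x + y) = 0 := by
      rw [map_add, hyeq]; abel
    have hxyV : x + y ∈ V := by rw [← hker, LinearMap.mem_ker]; exact hxy0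
    have hxyσ : x + y ∈ coneHull (toR '' ↑s) := by
      rw [← hs]; exact hσcone.2.1 x hx y hy
    have hxyτ : x + y ∈ τ := mem_tau_of_mem_V hτface' hτmeets hτmax' hxyσ hxyV
    have hxτ : x ∈ τ := (hτface.2.2 x hx y hy hxyτ).1
    exact hVsubker x (Submodule.mem_sup_right (Submodule.subset_span hxτ))
  refine ⟨hRat, hsc, hPsurj, ?_, ?_, ?_, ?_, ?_⟩
  -- L ≤ ker P
  · intro l hl
    rw [LinearMap.mem_ker]
    exact (hPker l).2 (Submodule.mem_sup_left (Submodule.subset_span ⟨l, hl, rfl⟩))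
  -- primitivity of ker P
  · intro v k hk hkv
    rw [LinearMap.mem_ker] at hkv ⊢
    rw [hPker] at hkv ⊢
    rw [toR_zsmul] at hkv
    have hkR : (k : ℝ) ≠ 0 := by exact_mod_cast hk
    have := Submodule.smul_mem _ ((k : ℝ)⁻¹) hkv
    rwa [smul_smul, inv_mul_cancel₀ hkR, one_smul] at this
  -- the fan of faces of the image
  · have himgcone : IsCone (extR P '' σ) := isCone_image (extR P) hσcone
    refine ⟨⟨⟨?_, ?_⟩, ?_, ?_⟩, ?_⟩
    · -- finiteness
      have : {ρ | IsFaceOf ρ (extR P '' σ)} ⊆ {ρ | IsFaceOf ρ (coneHull (toR '' ↑(s.image P)))} := by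
        intro ρ hρ; rw [← himg]; exact hρ
      exact Set.Finite.subset (finite_faces (((s.image P).finite_toSet).image toR)) this
    · -- rationality of the faces
      intro ρ hρ
      have hρ' : IsFaceOf ρ (coneHull (toR '' ↑(s.image P))) := by rw [← himg]; exact hρ
      obtain ⟨t', _, ht'⟩ := face_ratgens hρ'
      exact ⟨t', ht'⟩
    · -- faces of faces
      intro ρ hρ ρ' hρ'
      exact hρ'.trans hρ
    · -- intersections
      intro ρ hρ ρ' hρ'
      exact hρ.subset_isFace (hρ.inter hρ') Set.inter_subset_left
    · -- strict convexity of the faces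
      intro ρ hρ x hx hnx
      exact hsc x (hρ.2.1 hx) (hρ.2.1 hnx)
  -- P is a map of cone systems
  · intro τ' hτ'
    exact ⟨extR P '' σ, IsFaceOf.refl (isCone_image (extR P) hσcone),
      Set.image_mono hτ'.2.1⟩
  -- universal property
  · intro k F Δ' hΔ' hF hLF
    obtain ⟨sec, hsec⟩ := Module.projective_lifting_property P LinearMap.id hPsurj
    have hsec' : ∀ u, P (sec u) = u := fun u => by
      have := LinearMap.ext_iff.1 hsec u
      simpa using this
    set Ft := F.comp sec with hFtdef
    obtain ⟨δ', hδ'mem, hδ'sub⟩ := hF σ (IsFaceOf.refl hσcone)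
    have hδ'cone : IsCone δ' := by
      obtain ⟨tδ, htδ⟩ := hΔ'.1.1.2 δ' hδ'mem
      rw [htδ]; exact isCone_coneHull _
    have hδ'sc : IsStrictlyConvexCone δ' := hΔ'.2 δ' hδ'mem
    -- F kills V
    obtain ⟨w, hwL, hwi⟩ := hτmeets
    have hFw : extR F (toR w) = 0 := by
      rw [extR_toR]
      have : F w = 0 := hLF hwL
      rw [this, toR_zero]
    have hFτ : ∀ t ∈ τ, extR F t = 0 := by
      intro t ht
      have htspan : -t ∈ Submodule.span ℝ τ := Submodule.neg_mem _ (Submodule.subset_span ht)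
      obtain ⟨ε₁, hε₁, hmem⟩ := intrinsicInterior_move hτcone hwi htspan
      have ha : extR F t ∈ δ' := hδ'sub ⟨t, hτface.2.1 ht, rfl⟩
      have hb : extR F (toR w + ε₁ • (-t)) ∈ δ' := hδ'sub ⟨_, hτface.2.1 hmem, rfl⟩
      have hb' : -(ε₁ • extR F t) ∈ δ' := by
        have : extR F (toR w + ε₁ • (-t)) = -(ε₁ • extR F t) := by
          rw [map_add, hFw, map_smul, map_neg, zero_add, smul_neg]
        rwa [this] at hb
      have ha' : ε₁ • extR F t ∈ δ' := hδ'cone.2.2 ε₁ (le_of_lt hε₁) _ ha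
      have h0 : ε₁ • extR F t = 0 := hδ'sc _ ha' hb'
      rcases smul_eq_zero.1 h0 with h | h
      · exact absurd h (ne_of_gt hε₁)
      · exact h
    have hFV : ∀ x : Fin n → ℝ, x ∈ V → extR F x = 0 := by
      intro x hx
      rw [← LinearMap.mem_ker]
      revert x
      rw [← SetLike.le_def, hVdef]
      refine sup_le ?_ ?_
      · rw [Submodule.span_le]
        rintro _ ⟨l, hl, rfl⟩
        rw [SetLike.mem_coe, LinearMap.mem_ker, extR_toR]
        have : F l = 0 := hLF hl
        rw [this, toR_zero]
      · rw [Submodule.span_le]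
        intro t ht
        rw [SetLike.mem_coe, LinearMap.mem_ker]
        exact hFτ t ht
    have hFactors : F = Ft.comp P := by
      apply LinearMap.ext
      intro v
      rw [hFtdef, LinearMap.comp_apply, LinearMap.comp_apply]
      have hker' : P (sec (P v) - v) = 0 := by
        rw [map_sub, hsec' (P v), sub_self]
      have hV' : toR (sec (P v) - v) ∈ V := (hPker _).1 hker'
      have h0 : extR F (toR (sec (P v) - v)) = 0 := hFV _ hV'
      rw [extR_toR] at h0
      have : F (sec (P v) - v) = 0 := by
        apply toR_injective
        rw [h0, toR_zero]
      rw [map_sub, sub_eq_zero] at this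
      exact this.symm
    refine ⟨Ft, ?_, hFactors⟩
    intro ρ hρ
    refine ⟨δ', hδ'mem, ?_⟩
    rintro _ ⟨x, hx, rfl⟩
    obtain ⟨x₀, hx₀, rfl⟩ := hρ.2.1 hx
    have : extR Ft (extR P x₀) = extR F x₀ := by
      rw [← LinearMap.comp_apply, ← extR_comp, ← hFactors]
    rw [this]
    exact hδ'sub ⟨x₀, hx₀, rfl⟩
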